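/- arXiv:1401.7574 — 5 statements merged into one kernel-verified Lean document; each statement's English description precedes it below -/
import Mathlib

section
/- Optimal causation entropy principle: under the temporal, spatial, and faithfulness Markov assumptions, define the family K = {K ⊆ V : C_{K'→I} ≤ C_{K→I} for all K' ⊆ V} of node sets maximizing causation entropy to I. Then the set of causal parents satisfies N_I = ∩_{K ∈ K} K, and N_I is the unique minimal element of K. -/
/-!
Adding the parents `N` to a set `K` never lowers `C`, and raises it strictly unless `N ⊆ K`
(true positive); adding anything to `N` leaves `C` unchanged (no false positive). Hence
`C K ≤ C (K ∪ N) = C N`, so `N` is a maximizer, and a maximizer `K` with `N ⊄ K` would satisfy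
`C K < C (K ∪ N) ≤ C K`. So `N` lies in the family and below every member of it, and is
therefore its intersection.
-/

section

variable {V : Type*} [DecidableEq V] {C : Finset V → ℝ} {N : Finset V}

theorem apply_le_of_apply_union_eq (habs : ∀ J, C (N ∪ J) = C N)
    (hgain : ∀ K, ¬ N ⊆ K → C K < C (K ∪ N)) (K : Finset V) : C K ≤ C N := by
  by_cases hNK : N ⊆ K
  · rw [← Finset.union_eq_left.mpr hNK, Finset.union_comm, habs]
  · calc C K ≤ C (K ∪ N) := (hgain K hNK).le
      _ = C N := by rw [Finset.union_comm, habs]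

theorem subset_of_forall_apply_le (hgain : ∀ K, ¬ N ⊆ K → C K < C (K ∪ N)) {K : Finset V}
    (hK : ∀ K', C K' ≤ C K) : N ⊆ K := by
  by_contra hNK
  exact (hgain K hNK).not_ge (hK _)

end

theorem optimal_causation_entropy_principle_general {V : Type*} [DecidableEq V]
    (NI : Finset V)                      -- the set of causal parents of I
    (C : Finset V → ℝ)                   -- K ↦ C_{K→I}
    (Ccond : Finset V → Finset V → ℝ)    -- (J, K) ↦ C_{J→I|K}
    (hdecomp : ∀ J K, Ccond J K = C (K ∪ J) - C K)
    (hnofp : ∀ J K, NI ⊆ K → Ccond J K = 0)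
    (htp : ∀ J K, J ⊆ NI → ¬ J ⊆ K → 0 < Ccond J K) :
    (NI ∈ {K : Finset V | ∀ K', C K' ≤ C K}) ∧
    ((NI : Set V) = ⋂ K ∈ {K : Finset V | ∀ K', C K' ≤ C K}, (K : Set V)) ∧
    (∀ K ∈ {K : Finset V | ∀ K', C K' ≤ C K}, NI ⊆ K) := by
  have habs : ∀ J, C (NI ∪ J) = C NI := fun J => by
    linarith [hdecomp J NI, hnofp J NI subset_rfl]
  have hgain : ∀ K, ¬ NI ⊆ K → C K < C (K ∪ NI) := fun K hK => by
    linarith [hdecomp NI K, htp NI K subset_rfl hK]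
  have hmax : NI ∈ {K : Finset V | ∀ K', C K' ≤ C K} := apply_le_of_apply_union_eq habs hgain
  have hmin : ∀ K ∈ {K : Finset V | ∀ K', C K' ≤ C K}, NI ⊆ K := fun _ hK =>
    subset_of_forall_apply_le hgain hK
  exact ⟨hmax, (Set.subset_iInter₂ fun K hK => Finset.coe_subset.mpr (hmin K hK)).antisymm
    (Set.biInter_subset_of_mem hmax), hmin⟩

/-- Optimal causation entropy principle: given the established properties of causation
entropy (no false positive, true positive, decomposition), the set of causal parents
`N_I` equals the intersection of the family `𝒦` of node sets maximizing causation
entropy to `I`, and `N_I` is the unique minimal element of `𝒦`. -/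
theorem optimal_causation_entropy_principle {V : Type*} [Fintype V] [DecidableEq V]
    (NI : Finset V)                      -- the set of causal parents of I
    (C : Finset V → ℝ)                   -- K ↦ C_{K→I}
    (Ccond : Finset V → Finset V → ℝ)    -- (J, K) ↦ C_{J→I|K}
    (hdecomp : ∀ J K, Ccond J K = C (K ∪ J) - C K)
    (hnofp : ∀ J K, NI ⊆ K → Ccond J K = 0)
    (htp : ∀ J K, J ⊆ NI → ¬ J ⊆ K → 0 < Ccond J K) :
    (NI ∈ {K : Finset V | ∀ K', C K' ≤ C K}) ∧
    ((NI : Set V) = ⋂ K ∈ {K : Finset V | ∀ K', C K' ≤ C K}, (K : Set V)) ∧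
    (∀ K ∈ {K : Finset V | ∀ K', C K' ≤ C K}, NI ⊆ K) :=
  optimal_causation_entropy_principle_general NI C Ccond hdecomp hnofp htp
end

section
/- Correctness of aggregative discovery: under the Markov assumptions, define sequences K_0 = ∅ and, for i ≥ 1, x_i = max_{x ∈ V∖K_{i-1}} C_{x→I|K_{i-1}}, p_i = argmax of the same, K_i = {p_1,...,p_i}. Then there exists q with |N_I| ≤ q ≤ n such that x_i > 0 for 1 ≤ i ≤ q, x_i = 0 for i > q, and N_I ⊆ K_q. -/
/-!
The sets `K_i` grow by one new node per step, so `K_n` is all of `V` and in particular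
contains `N_I`. Take `q` minimal with `N_I ⊆ K_q`; then `|N_I| ≤ |K_q| = q`. For `i ≤ q` some
parent `j ∉ K_{i-1}` is still missing, so `x_i ≥ C_{j→I|K_{i-1}} > 0`; for `i > q` the
conditioning set `K_{i-1}` already contains `N_I`, so `x_i = 0`.
-/

namespace Finset

variable {α : Type*} {K : ℕ → Finset α} {n : ℕ}

theorem subset_of_le_of_forall_subset_succ (hstep : ∀ i < n, K i ⊆ K (i + 1)) {i j : ℕ}
    (hij : i ≤ j) (hj : j ≤ n) : K i ⊆ K j := by
  induction j, hij using Nat.le_induction with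
  | base => exact subset_rfl
  | succ j _ ih => exact (ih (by omega)).trans (hstep j (by omega))

variable [DecidableEq α]

theorem card_eq_of_forall_eq_insert_notMem (h0 : K 0 = ∅)
    (hstep : ∀ i < n, ∃ a ∉ K i, K (i + 1) = insert a (K i)) {i : ℕ} (hi : i ≤ n) :
    #(K i) = i := by
  induction i with
  | zero => simp [h0]
  | succ i ih =>
    obtain ⟨a, ha, hK⟩ := hstep i hi
    rw [hK, card_insert_of_notMem ha, ih (by omega)]

theorem eq_univ_of_forall_eq_insert_notMem [Fintype α] (h0 : K 0 = ∅)
    (hstep : ∀ i < n, ∃ a ∉ K i, K (i + 1) = insert a (K i)) (hn : n = Fintype.card α) :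
    K n = univ :=
  eq_univ_of_card _ (hn ▸ card_eq_of_forall_eq_insert_notMem h0 hstep le_rfl)

end Finset

theorem aggregative_discovery_general {V : Type*} [Fintype V] [DecidableEq V]
    (NI : Finset V)                  -- the set of causal parents of I
    (Ccond : V → Finset V → ℝ)       -- (j, K) ↦ C_{j→I|K}
    (htp : ∀ j K, j ∈ NI → j ∉ K → 0 < Ccond j K)
    (hnofp : ∀ j K, NI ⊆ K → Ccond j K = 0)
    (n : ℕ) (hn : n = Fintype.card V)
    (p : ℕ → V) (x : ℕ → ℝ) (Kseq : ℕ → Finset V)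
    (hK0 : Kseq 0 = ∅)
    (hKstep : ∀ i, 1 ≤ i → i ≤ n → Kseq i = insert (p i) (Kseq (i - 1)))
    (hpnew : ∀ i, 1 ≤ i → i ≤ n → p i ∉ Kseq (i - 1))
    (hx : ∀ i, 1 ≤ i → i ≤ n → x i = Ccond (p i) (Kseq (i - 1)))
    (hmax : ∀ i, 1 ≤ i → i ≤ n → ∀ j, j ∉ Kseq (i - 1) → Ccond j (Kseq (i - 1)) ≤ x i)
    (hxbig : ∀ i, n < i → x i = 0) :
    ∃ q, NI.card ≤ q ∧ q ≤ n ∧ (∀ i, 1 ≤ i → i ≤ q → 0 < x i) ∧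
      (∀ i, q < i → x i = 0) ∧ NI ⊆ Kseq q := by
  have hchain : ∀ i < n, ∃ a ∉ Kseq i, Kseq (i + 1) = insert a (Kseq i) := fun i hi =>
    ⟨p (i + 1), by simpa using hpnew (i + 1) (by omega) hi,
      by simpa using hKstep (i + 1) (by omega) hi⟩
  have hcover : NI ⊆ Kseq n :=
    Finset.eq_univ_of_forall_eq_insert_notMem hK0 hchain hn ▸ Finset.subset_univ NI
  have hmono : ∀ i < n, Kseq i ⊆ Kseq (i + 1) := fun i hi => by
    obtain ⟨a, -, hK⟩ := hchain i hi
    exact hK ▸ Finset.subset_insert a _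
  have hex : ∃ i, NI ⊆ Kseq i := ⟨n, hcover⟩
  let q := Nat.find hex
  have hq : NI ⊆ Kseq q := Nat.find_spec hex
  have hqn : q ≤ n := Nat.find_le hcover
  refine ⟨q, ?_, hqn, fun i hi hiq => ?_, fun i hqi => ?_, hq⟩
  · calc NI.card ≤ (Kseq q).card := Finset.card_le_card hq
      _ = q := Finset.card_eq_of_forall_eq_insert_notMem hK0 hchain hqn
  · obtain ⟨j, hjN, hjK⟩ := Finset.not_subset.mp (Nat.find_min hex (by omega : i - 1 < q))
    exact (htp j _ hjN hjK).trans_le (hmax i hi (by omega) j hjK)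
  · rcases le_or_gt i n with hin | hin
    · rw [hx i (by omega) hin]
      exact hnofp _ _ <| hq.trans <|
        Finset.subset_of_le_of_forall_subset_succ hmono (by omega) (by omega)
    · exact hxbig i hin

/-- Correctness of aggregative discovery of causal nodes: with `K_0 = ∅` and, at each
step, `p_i` a maximizer of `C_{x→I|K_{i-1}}` over `x ∈ V ∖ K_{i-1}`, `x_i` the maximal
value, and `K_i = K_{i-1} ∪ {p_i}`, there exists `q` with `|N_I| ≤ q ≤ n` such that
`x_i > 0` for `1 ≤ i ≤ q`, `x_i = 0` for `i > q`, and `N_I ⊆ K_q`. -/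
theorem aggregative_discovery {V : Type*} [Fintype V] [DecidableEq V]
    (NI : Finset V)                  -- the set of causal parents of I
    (Ccond : V → Finset V → ℝ)       -- (j, K) ↦ C_{j→I|K}
    (htp : ∀ j K, j ∈ NI → j ∉ K → 0 < Ccond j K)
    (hnofp : ∀ j K, NI ⊆ K → Ccond j K = 0)
    (hmem : ∀ j K, j ∈ K → Ccond j K = 0)
    (n : ℕ) (hn : n = Fintype.card V)
    (p : ℕ → V) (x : ℕ → ℝ) (Kseq : ℕ → Finset V)
    (hK0 : Kseq 0 = ∅)
    (hKstep : ∀ i, 1 ≤ i → i ≤ n → Kseq i = insert (p i) (Kseq (i - 1)))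
    (hKconst : ∀ i, n ≤ i → Kseq i = Kseq n)
    (hpnew : ∀ i, 1 ≤ i → i ≤ n → p i ∉ Kseq (i - 1))
    (hx : ∀ i, 1 ≤ i → i ≤ n → x i = Ccond (p i) (Kseq (i - 1)))
    (hmax : ∀ i, 1 ≤ i → i ≤ n → ∀ j, j ∉ Kseq (i - 1) → Ccond j (Kseq (i - 1)) ≤ x i)
    (hxbig : ∀ i, n < i → x i = 0) :
    ∃ q, NI.card ≤ q ∧ q ≤ n ∧ (∀ i, 1 ≤ i → i ≤ q → 0 < x i) ∧
      (∀ i, q < i → x i = 0) ∧ NI ⊆ Kseq q :=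
  aggregative_discovery_general NI Ccond htp hnofp n hn p x Kseq hK0 hKstep hpnew hx hmax hxbig
end

section
/- Correctness of progressive removal: let K = {p_1,...,p_q} with N_I ⊆ K. Define K_0 = K and, for 1 ≤ i ≤ q, K_i = K_{i-1} if C_{p_i→I|(K_{i-1}∖{p_i})} > 0 and K_i = K_{i-1}∖{p_i} otherwise. Then K_q = N_I. -/
/-!
Every set `K_i` contains `N_I`, and its elements outside `N_I` are among `p_{i+1}, …, p_q`.
A parent is never removed, because `C_{j→I|L} > 0` whenever the parent `j` is missing from `L`.
A non-parent `p_i` still present in `K_{i-1}` is removed, because `K_{i-1} ∖ {p_i}` still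
contains `N_I`, so the causation entropy it is tested against vanishes.
-/

namespace ProgressiveRemoval

variable {V : Type*} [DecidableEq V]

noncomputable def removalStep (C : V → Finset V → ℝ) (L : Finset V) (j : V) : Finset V :=
  if 0 < C j (L \ {j}) then L else L \ {j}

variable {NI : Finset V} {C : V → Finset V → ℝ}

theorem subset_sdiff_singleton_of_notMem {L : Finset V} (hL : NI ⊆ L) {j : V} (hj : j ∉ NI) :
    NI ⊆ L \ {j} :=
  Finset.subset_sdiff.2 ⟨hL, Finset.disjoint_singleton_right.2 hj⟩

theorem subset_removalStep (hpos : ∀ j L, j ∈ NI → j ∉ L → 0 < C j L)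
    {L : Finset V} (hL : NI ⊆ L) (j : V) : NI ⊆ removalStep C L j := by
  unfold removalStep
  split_ifs with hj
  · exact hL
  · exact subset_sdiff_singleton_of_notMem hL fun hjNI => hj (hpos _ _ hjNI (by simp))

theorem removalStep_subset (hzero : ∀ j L, NI ⊆ L → C j L = 0)
    {L : Finset V} (hL : NI ⊆ L) (j : V) : removalStep C L j ⊆ NI ∪ L \ {j} := by
  unfold removalStep
  split_ifs with hj
  · have hjNI : j ∈ NI := by
      by_contra hjNI
      exact hj.ne' (hzero _ _ (subset_sdiff_singleton_of_notMem hL hjNI))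
    intro x hx
    by_cases hxj : x = j
    · exact Finset.mem_union_left _ (hxj ▸ hjNI)
    · simp [hx, hxj]
  · exact Finset.subset_union_right

theorem image_Icc_sdiff_subset (p : ℕ → V) {i q : ℕ} (hi : i + 1 ≤ q) :
    (Finset.Icc (i + 1) q).image p \ {p (i + 1)} ⊆ (Finset.Icc (i + 2) q).image p := by
  rw [← Finset.insert_Icc_add_one_left_eq_Icc hi, Finset.image_insert,
    Finset.sdiff_singleton_eq_erase]
  exact Finset.erase_insert_subset _ _

theorem removal_invariant (hpos : ∀ j L, j ∈ NI → j ∉ L → 0 < C j L)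
    (hzero : ∀ j L, NI ⊆ L → C j L = 0) (q : ℕ) (p : ℕ → V) (Kseq : ℕ → Finset V)
    (hK0 : NI ⊆ Kseq 0 ∧ Kseq 0 ⊆ NI ∪ (Finset.Icc 1 q).image p)
    (hstep : ∀ i, i + 1 ≤ q → Kseq (i + 1) = removalStep C (Kseq i) (p (i + 1))) :
    ∀ i ≤ q, NI ⊆ Kseq i ∧ Kseq i ⊆ NI ∪ (Finset.Icc (i + 1) q).image p := by
  intro i
  induction i with
  | zero => exact fun _ => hK0
  | succ i ih =>
    intro hi
    obtain ⟨hlow, hhigh⟩ := ih (Nat.le_of_succ_le hi)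
    rw [hstep i hi]
    refine ⟨subset_removalStep hpos hlow _, (removalStep_subset hzero hlow _).trans ?_⟩
    calc NI ∪ Kseq i \ {p (i + 1)}
        ⊆ NI ∪ (NI ∪ (Finset.Icc (i + 1) q).image p) \ {p (i + 1)} := by gcongr
      _ ⊆ NI ∪ (Finset.Icc (i + 2) q).image p := by
        rw [Finset.union_sdiff_distrib, ← Finset.union_assoc, Finset.union_eq_left.2
          Finset.sdiff_subset]
        gcongr
        exact image_Icc_sdiff_subset p hi

end ProgressiveRemoval

open ProgressiveRemoval in
theorem progressive_removal_general {V : Type*} [DecidableEq V]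
    (NI : Finset V)                  -- the set of causal parents of I
    (Ccond : V → Finset V → ℝ)       -- (j, L) ↦ C_{j→I|L}
    (htp : ∀ j L, j ∈ NI → j ∉ L → 0 < Ccond j L)
    (hnofp : ∀ j L, NI ⊆ L → Ccond j L = 0)
    (q : ℕ) (p : ℕ → V) (K : Finset V)
    (hK : K = (Finset.Icc 1 q).image p)
    (hNIK : NI ⊆ K)
    (Kseq : ℕ → Finset V)
    (hK0 : Kseq 0 = K)
    (hstep : ∀ i, 1 ≤ i → i ≤ q →
      Kseq i = if 0 < Ccond (p i) (Kseq (i - 1) \ {p i}) then Kseq (i - 1)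
               else Kseq (i - 1) \ {p i}) :
    Kseq q = NI := by
  obtain ⟨hlow, hhigh⟩ := removal_invariant htp hnofp q p Kseq
    ⟨hK0 ▸ hNIK, hK0 ▸ hK ▸ Finset.subset_union_right⟩
    (fun i hi => hstep (i + 1) (by omega) hi) q le_rfl
  rw [Finset.Icc_eq_empty (by omega), Finset.image_empty, Finset.union_empty] at hhigh
  exact hhigh.antisymm hlow

/-- Correctness of progressive removal of non-causal nodes: starting from
`K_0 = K = {p_1,...,p_q} ⊇ N_I` and removing `p_i` at step `i` exactly when
`C_{p_i→I|(K_{i-1}∖{p_i})}` is not positive, the final set is `K_q = N_I`. -/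
theorem progressive_removal {V : Type*} [Fintype V] [DecidableEq V]
    (NI : Finset V)                  -- the set of causal parents of I
    (Ccond : V → Finset V → ℝ)       -- (j, L) ↦ C_{j→I|L}
    (htp : ∀ j L, j ∈ NI → j ∉ L → 0 < Ccond j L)
    (hnofp : ∀ j L, NI ⊆ L → Ccond j L = 0)
    (q : ℕ) (p : ℕ → V) (K : Finset V)
    (hK : K = (Finset.Icc 1 q).image p)
    (hNIK : NI ⊆ K)
    (Kseq : ℕ → Finset V)
    (hK0 : Kseq 0 = K)
    (hstep : ∀ i, 1 ≤ i → i ≤ q →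
      Kseq i = if 0 < Ccond (p i) (Kseq (i - 1) \ {p i}) then Kseq (i - 1)
               else Kseq (i - 1) \ {p i}) :
    Kseq q = NI :=
  progressive_removal_general NI Ccond htp hnofp q p K hK hNIK Kseq hK0 hstep
end

section
/- Directed linear chain: consider X^{(i)}_t = X^{(i-1)}_{t-1} + ξ^{(i)}_t for i = 2,...,n and X^{(1)}_t = ξ^{(1)}_t, with independent ξ^{(i)}_t ~ N(0, σ_i²). Then the stationary covariances are Φ(0)_{ij} = δ_{ij} Σ_{k=1}^{j} σ_k² and Φ(1)_{ij} = δ_{i,j+1} Σ_{k=1}^{j} σ_k², and the causation entropy satisfies C_{j→i} = (1/2) δ_{i,j+1} log(1 + (Σ_{k=1}^{j} σ_k²)/σ_i²). In particular C_{j→i} > 0 if and only if i = j+1. -/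
/-!
The matrix `A` is the nilpotent lower shift, so the series defining `Φ(0)` stops after `n` terms,
and `A^k S (A^k)ᵀ` carries `σ_{j-k}²` at the diagonal place `(j, j)` for `k ≤ j`. Hence
`Φ(0) = diag(P)` with the partial sums `P_j = Σ_{k ≤ j} σ_k²`, and `Φ(1) = A Φ(0)` lives on the
subdiagonal. On a link `j → j + 1` the residual variance `P_{j+1} - P_j²/P_j` is `σ_{j+1}²`,
which turns the Gaussian formula into `(1/2) log (P_{j+1} / σ_{j+1}²)`; off the links
`Φ(1)_{ij} = 0` and the two logarithms cancel.
-/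

open Finset Matrix

theorem Fin.sum_range_ite_val_eq_val_add {M : Type*} [AddCommMonoid M] {n : ℕ} (i j : Fin n)
    (c : M) :
    ∑ k ∈ range n, (if (i : ℕ) = (j : ℕ) + k then c else 0) = if j ≤ i then c else 0 := by
  by_cases hji : j ≤ i
  · rw [if_pos hji, Finset.sum_eq_single ((i : ℕ) - j)]
    · rw [if_pos (by rw [Fin.le_def] at hji; omega)]
    · intro k _ hk
      rw [if_neg (by omega)]
    · intro h
      exact absurd (mem_range.2 (by omega)) h
  · rw [if_neg hji, Finset.sum_eq_zero]
    intro k _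
    rw [if_neg (by rw [Fin.le_def] at hji; omega)]

namespace Matrix

def lowerShift (n : ℕ) (R : Type*) [Zero R] [One R] : Matrix (Fin n) (Fin n) R :=
  of fun i j => if (i : ℕ) = (j : ℕ) + 1 then 1 else 0

variable {n : ℕ} {R : Type*}

@[simp]
theorem lowerShift_apply [Zero R] [One R] (i j : Fin n) :
    lowerShift n R i j = if (i : ℕ) = (j : ℕ) + 1 then 1 else 0 :=
  rfl

theorem lowerShift_pow_apply [Semiring R] (k : ℕ) (i j : Fin n) :
    (lowerShift n R ^ k) i j = if (i : ℕ) = (j : ℕ) + k then 1 else 0 := by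
  induction k generalizing i with
  | zero => simp [one_apply, Fin.ext_iff]
  | succ k ih =>
    rw [pow_succ', mul_apply]
    by_cases hj : (j : ℕ) + k < n
    · rw [Finset.sum_eq_single ⟨(j : ℕ) + k, hj⟩]
      · rw [ih, lowerShift_apply, if_pos rfl, mul_one]
        simp only [add_assoc]
      · intro b _ hb
        rw [ih, if_neg (fun h => hb (Fin.ext h)), mul_zero]
      · simp
    · rw [if_neg (by omega), Finset.sum_eq_zero]
      intro b _
      rw [ih, if_neg (by omega), mul_zero]

theorem lowerShift_pow_eq_zero [Semiring R] {k : ℕ} (hk : n ≤ k) : lowerShift n R ^ k = 0 := by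
  ext i j
  rw [lowerShift_pow_apply, if_neg (by omega), zero_apply]

theorem tsum_lowerShift_pow_mul_diagonal_mul_transpose [CommSemiring R] [TopologicalSpace R]
    (d : Fin n → R) :
    ∑' k : ℕ, lowerShift n R ^ k * diagonal d * (lowerShift n R ^ k)ᵀ =
      diagonal fun j => ∑ b ∈ univ.filter (· ≤ j), d b := by
  rw [tsum_eq_sum (s := range n) fun k hk => by
    rw [lowerShift_pow_eq_zero (by simpa using hk), zero_mul, zero_mul]]
  ext i j
  have hterm : ∀ k, (lowerShift n R ^ k * diagonal d * (lowerShift n R ^ k)ᵀ) i j =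
      ∑ b : Fin n, if (i : ℕ) = (b : ℕ) + k ∧ (j : ℕ) = (b : ℕ) + k then d b else 0 := by
    intro k
    refine (mul_apply ..).trans (Finset.sum_congr rfl fun b _ => ?_)
    rw [mul_diagonal, transpose_apply, lowerShift_pow_apply, lowerShift_pow_apply]
    split_ifs <;> simp_all
  rw [sum_apply, Finset.sum_congr rfl fun k _ => hterm k, Finset.sum_comm, diagonal_apply,
    sum_filter]
  by_cases hij : i = j
  · subst hij
    simp only [and_self, if_true]
    exact Finset.sum_congr rfl fun b _ => Fin.sum_range_ite_val_eq_val_add i b (d b)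
  · rw [if_neg hij]
    refine Finset.sum_eq_zero fun b _ => Finset.sum_eq_zero fun k _ => if_neg ?_
    rintro ⟨hi, hj⟩
    exact hij (Fin.ext (by omega))

end Matrix

theorem Fin.sum_filter_le_of_val_eq_succ {M : Type*} [AddCommMonoid M] {n : ℕ} (f : Fin n → M)
    {i j : Fin n} (hij : (i : ℕ) = (j : ℕ) + 1) :
    ∑ k ∈ univ.filter (· ≤ i), f k = ∑ k ∈ univ.filter (· ≤ j), f k + f i := by
  have hinsert : univ.filter (· ≤ i) = insert i (univ.filter (· ≤ j)) := by
    ext k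
    simp only [mem_filter, mem_univ, true_and, mem_insert, Fin.le_def, Fin.ext_iff]
    omega
  rw [hinsert, Finset.sum_insert, add_comm]
  simp only [mem_filter, mem_univ, true_and, Fin.le_def]
  omega

theorem Real.half_log_add_sub_half_log_add_sub_sq_div_self {p s : ℝ} (hp : 0 < p) (hs : 0 < s) :
    1 / 2 * Real.log (p + s) - 1 / 2 * Real.log (p + s - p ^ 2 / p) =
      1 / 2 * Real.log (1 + p / s) := by
  have hres : p + s - p ^ 2 / p = s := by field_simp; ring
  rw [hres, ← mul_sub, ← Real.log_div (by positivity) hs.ne', add_div, div_self hs.ne', add_comm]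

/-- Directed linear chain `1 → 2 → ⋯ → n` (0-indexed: link `j → j+1`) with node noise
variances `σ_i²`: the stationary covariances are `Φ(0)_{ij} = δ_{ij} Σ_{k≤j} σ_k²` and
`Φ(1)_{ij} = δ_{i,j+1} Σ_{k≤j} σ_k²`, and the (unconditioned, Gaussian) causation
entropy is `C_{j→i} = (1/2) δ_{i,j+1} log (1 + (Σ_{k≤j} σ_k²)/σ_i²)`; in particular
`C_{j→i} > 0` iff `i = j + 1`. -/
theorem directed_linear_chain {n : ℕ} (σ : Fin n → ℝ) (hσ : ∀ i, 0 < σ i)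
    (A : Matrix (Fin n) (Fin n) ℝ)
    (hA : ∀ i j, A i j = if (i : ℕ) = (j : ℕ) + 1 then 1 else 0)
    (S : Matrix (Fin n) (Fin n) ℝ) (hS : S = Matrix.diagonal (fun i => σ i ^ 2))
    (Φ0 Φ1 : Matrix (Fin n) (Fin n) ℝ)
    (hΦ0 : Φ0 = ∑' k : ℕ, A ^ k * S * (A ^ k)ᵀ)
    (hΦ1 : Φ1 = A * Φ0)
    (C : Fin n → Fin n → ℝ)   -- C j i = C_{j→i}, via the Gaussian formula
    (hC : ∀ j i, C j i = (1 / 2) * Real.log (Φ0 i i) -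
        (1 / 2) * Real.log (Φ0 i i - (Φ1 i j) ^ 2 / Φ0 j j)) :
    (∀ i j, Φ0 i j =
      if i = j then ∑ k ∈ Finset.univ.filter (· ≤ j), σ k ^ 2 else 0) ∧
    (∀ i j, Φ1 i j =
      if (i : ℕ) = (j : ℕ) + 1 then ∑ k ∈ Finset.univ.filter (· ≤ j), σ k ^ 2 else 0) ∧
    (∀ j i, C j i =
      if (i : ℕ) = (j : ℕ) + 1 then
        (1 / 2) * Real.log (1 + (∑ k ∈ Finset.univ.filter (· ≤ j), σ k ^ 2) / σ i ^ 2)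
      else 0) ∧
    (∀ j i, 0 < C j i ↔ (i : ℕ) = (j : ℕ) + 1) := by
  set P : Fin n → ℝ := fun j => ∑ k ∈ Finset.univ.filter (· ≤ j), σ k ^ 2
  have hP_pos : ∀ j, 0 < P j := fun j => sum_pos (fun k _ => pow_pos (hσ k) 2) ⟨j, by simp⟩
  have hΦ0_eq : Φ0 = diagonal P := by
    rw [hΦ0, show A = lowerShift n ℝ from Matrix.ext hA, hS,
      tsum_lowerShift_pow_mul_diagonal_mul_transpose]
  have hΦ0_apply : ∀ i j, Φ0 i j = if i = j then P j else 0 := fun i j => by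
    rw [hΦ0_eq]; split_ifs with h <;> simp [h]
  have hΦ1_apply : ∀ i j, Φ1 i j = if (i : ℕ) = (j : ℕ) + 1 then P j else 0 := fun i j => by
    rw [hΦ1, hΦ0_eq, mul_diagonal, hA]; split_ifs <;> simp
  have hC_apply : ∀ j i, C j i =
      if (i : ℕ) = (j : ℕ) + 1 then 1 / 2 * Real.log (1 + P j / σ i ^ 2) else 0 := by
    intro j i
    rw [hC, hΦ1_apply, hΦ0_apply, hΦ0_apply, if_pos rfl, if_pos rfl]
    split_ifs with hij
    · have hP_succ : P i = P j + σ i ^ 2 := Fin.sum_filter_le_of_val_eq_succ _ hij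
      rw [hP_succ]
      exact Real.half_log_add_sub_half_log_add_sub_sq_div_self (hP_pos j) (pow_pos (hσ i) 2)
    · simp
  refine ⟨hΦ0_apply, hΦ1_apply, hC_apply, fun j i => ?_⟩
  rw [hC_apply]
  split_ifs with hij
  · have hratio : 0 < P j / σ i ^ 2 := div_pos (hP_pos j) (pow_pos (hσ i) 2)
    exact iff_of_true (mul_pos one_half_pos (Real.log_pos (by linarith))) hij
  · exact iff_of_false (lt_irrefl 0) hij
end

section
/- Directed loop: for the process on a directed n-cycle with uniform weight 0 < w < 1 (X^{(i)}_t = w X^{(p_i)}_{t-1} + ξ^{(i)}_t, ξ^{(i)}_t ~ N(0,σ²) i.i.d., where p_i is the unique in-neighbor of i), the stationary covariances are Φ(0)_{ij} = δ_{ij} σ²/(1−w²) and Φ(1)_{ij} = δ_{p_i,j} σ² w/(1−w²), and the causation entropy is C_{j→i} = (1/2) δ_{p_i,j} log(1/(1−w²)). -/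
open Matrix

/-! The weight matrix is `w` times the permutation matrix of the cyclic shift, so
`A Aᵀ = w² I` and each term `Aᵏ S (Aᵏ)ᵀ` of the stationary series is the scalar matrix
`σ² w²ᵏ I`; summing the geometric series gives `Φ(0) = σ²/(1-w²) I`.
With `Φ(0)` scalar, the Gaussian causation entropy collapses to `½ log (1/(1 - A_{ij}²))`. -/

namespace Matrix

variable {m R : Type*} [Fintype m] [DecidableEq m]

theorem mul_transpose_eq_smul_one_of_injective [CommSemiring R] {p : m → m}
    (hp : p.Injective) (w : R) (A : Matrix m m R)
    (hA : ∀ i j, A i j = if j = p i then w else 0) :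
    A * Aᵀ = w ^ 2 • (1 : Matrix m m R) := by
  ext i j
  simp only [mul_apply, transpose_apply, hA, mul_ite, ite_mul, mul_zero, zero_mul,
    Finset.sum_ite_eq', Finset.mem_univ, if_true, hp.eq_iff, smul_apply, one_apply,
    smul_eq_mul, mul_one, sq]
  exact if_congr eq_comm rfl rfl

theorem pow_mul_transpose_pow_of_mul_transpose_eq_smul_one [CommSemiring R]
    {A : Matrix m m R} {c : R} (hA : A * Aᵀ = c • 1) (k : ℕ) :
    A ^ k * (A ^ k)ᵀ = c ^ k • (1 : Matrix m m R) := by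
  induction k with
  | zero => simp
  | succ k ih =>
    calc A ^ (k + 1) * (A ^ (k + 1))ᵀ = A ^ k * (A * Aᵀ) * (A ^ k)ᵀ := by
          rw [pow_succ, transpose_mul, Matrix.mul_assoc, Matrix.mul_assoc, Matrix.mul_assoc]
      _ = c ^ (k + 1) • 1 := by
          rw [hA, Matrix.mul_smul, Matrix.mul_one, Matrix.smul_mul, ih, smul_smul, pow_succ']

theorem tsum_pow_mul_smul_one_mul_transpose_pow {A : Matrix m m ℝ} {c : ℝ}
    (hA : A * Aᵀ = c • 1) (hc0 : 0 ≤ c) (hc1 : c < 1) (s : ℝ) :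
    ∑' k : ℕ, A ^ k * (s • 1) * (A ^ k)ᵀ = (s / (1 - c)) • (1 : Matrix m m ℝ) := by
  have hterm : ∀ k : ℕ, A ^ k * (s • 1) * (A ^ k)ᵀ = (s * c ^ k) • (1 : Matrix m m ℝ) := by
    intro k
    rw [Matrix.mul_smul, Matrix.mul_one, Matrix.smul_mul,
      pow_mul_transpose_pow_of_mul_transpose_eq_smul_one hA, smul_smul]
  have hsum : Summable (fun k : ℕ => s * c ^ k) :=
    (summable_geometric_of_lt_one hc0 hc1).mul_left s
  rw [tsum_congr hterm, hsum.tsum_smul_const, tsum_mul_left,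
    tsum_geometric_of_lt_one hc0 hc1, div_eq_mul_inv]

end Matrix

theorem div_sub_mul_sq_div {K : Type*} [Field K] {d : K} (hd : d ≠ 0) (a : K) :
    d / (d - (d * a) ^ 2 / d) = 1 / (1 - a ^ 2) := by
  rw [show d - (d * a) ^ 2 / d = d * (1 - a ^ 2) by field_simp, div_mul_eq_div_div,
    div_self hd]

/-- Directed loop on `n` nodes with uniform weight `0 < w < 1` and i.i.d. `N(0,σ²)`
noise: with `p_i = i - 1 (mod n)` the unique in-neighbor of `i`, the stationary
covariances are `Φ(0)_{ij} = δ_{ij} σ²/(1-w²)` and `Φ(1)_{ij} = δ_{p_i,j} σ²w/(1-w²)`,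
and the (unconditioned, Gaussian) causation entropy is
`C_{j→i} = (1/2) δ_{p_i,j} log (1/(1-w²))`. -/
theorem directed_loop {n : ℕ} [NeZero n] (w σ : ℝ) (hw0 : 0 < w) (hw1 : w < 1)
    (hσ : 0 < σ)
    (A : Matrix (Fin n) (Fin n) ℝ)
    (hA : ∀ i j, A i j = if j = i - 1 then w else 0)
    (S : Matrix (Fin n) (Fin n) ℝ) (hS : S = Matrix.diagonal (fun _ => σ ^ 2))
    (Φ0 Φ1 : Matrix (Fin n) (Fin n) ℝ)
    (hΦ0 : Φ0 = ∑' k : ℕ, A ^ k * S * (A ^ k)ᵀ)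
    (hΦ1 : Φ1 = A * Φ0)
    (C : Fin n → Fin n → ℝ)   -- C j i = C_{j→i}, via the Gaussian formula
    (hC : ∀ j i, C j i = (1 / 2) * Real.log (Φ0 i i /
        (Φ0 i i - (Φ1 i j) ^ 2 / Φ0 j j))) :
    (∀ i j, Φ0 i j = if i = j then σ ^ 2 / (1 - w ^ 2) else 0) ∧
    (∀ i j, Φ1 i j = if j = i - 1 then σ ^ 2 * w / (1 - w ^ 2) else 0) ∧
    (∀ j i, C j i = if j = i - 1 then (1 / 2) * Real.log (1 / (1 - w ^ 2)) else 0) := by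
  have hw2 : w ^ 2 < 1 := by nlinarith
  set d := σ ^ 2 / (1 - w ^ 2)
  have hd : d ≠ 0 := div_ne_zero (by positivity) (sub_ne_zero.2 hw2.ne')
  have hAAt : A * Aᵀ = w ^ 2 • 1 :=
    mul_transpose_eq_smul_one_of_injective sub_left_injective w A hA
  have hΦ0' : Φ0 = d • (1 : Matrix (Fin n) (Fin n) ℝ) := by
    rw [hΦ0, hS, ← smul_one_eq_diagonal,
      tsum_pow_mul_smul_one_mul_transpose_pow hAAt (sq_nonneg w) hw2]
  have hΦ1' : Φ1 = d • A := by rw [hΦ1, hΦ0', Matrix.mul_smul, Matrix.mul_one]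
  refine ⟨fun i j => by simp [hΦ0', one_apply], fun i j => ?_, fun j i => ?_⟩
  · rw [hΦ1', Matrix.smul_apply, hA, smul_eq_mul, mul_ite, mul_zero, div_mul_eq_mul_div]
  · have hCij : C j i = 1 / 2 * Real.log (1 / (1 - A i j ^ 2)) := by
      simpa only [hΦ0', hΦ1', Matrix.smul_apply, one_apply_eq, smul_eq_mul, mul_one,
        div_sub_mul_sq_div hd] using hC j i
    rw [hCij, hA]
    split_ifs <;> simp
end
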